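/- arXiv:2212.09835 — 5 statements merged into one kernel-verified Lean document; each statement's English description precedes it below -/
import Mathlib

section
/- The sequence g_n = 2*(4n+1)!/((n+1)!*(3n+2)!) satisfies the asymptotic equivalence g_n ~ (1/16)*sqrt(3/(2π)) * n^(-5/2) * (256/27)^(n+1) as n → ∞; that is, the ratio of g_n to (1/16)*sqrt(3/(2π)) * n^(-5/2) * (256/27)^(n+1) tends to 1. -/
/-!
For `n ≥ 1`, `g_n = (8n+2)/((n+1)(3n+1)(3n+2)) · C(4n, n)`. The rational prefactor is
asymptotic to `8/(9n²)`, and Stirling's formula applied to `(4n)!`, `n!` and `(3n)!` gives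
`C(4n, n) ~ √(2/(3πn)) · (256/27)^n`; the product is the claimed equivalent.
-/

open Filter Real Topology

/-- `gseq n` is the number `g_n = 2·(4n+1)!/((n+1)!·(3n+2)!)` of rooted 3-connected
planar triangulations with `2n+2` faces (as a real number), with `g_0 = 0`. -/
noncomputable def gseq (n : ℕ) : ℝ :=
  if n = 0 then 0
  else 2 * (Nat.factorial (4 * n + 1)) / ((Nat.factorial (n + 1)) * (Nat.factorial (3 * n + 2)))

open Asymptotics Nat

theorem factorial_mul_isEquivalent {k : ℕ} (hk : 0 < k) :
    (fun n : ℕ => ((k * n)! : ℝ)) ~[atTop]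
      fun n => √(2 * (k * n) * π) * (k * n / exp 1) ^ (k * n) := by
  have := Stirling.factorial_isEquivalent_stirling.comp_tendsto
    (tendsto_atTop_mono (fun n => Nat.le_mul_of_pos_left n hk) tendsto_id)
  simpa only [Function.comp_def, Nat.cast_mul] using this

theorem mul_div_exp_pow (c n : ℕ) :
    ((c : ℝ) * n / exp 1) ^ (c * n) = ((c : ℝ) ^ c) ^ n * (n / exp 1) ^ (c * n) := by
  rw [mul_div_assoc, mul_pow, ← pow_mul, mul_comm c n, pow_mul]

theorem isEquivalent_choose_mul {a b : ℕ} (ha : 0 < a) (hb : 0 < b) :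
    (fun n : ℕ => (((a + b) * n).choose (a * n) : ℝ)) ~[atTop]
      fun n => √((a + b) / (2 * π * a * b * n)) *
        ((a + b) ^ (a + b) / (a ^ a * b ^ b) : ℝ) ^ n := by
  have hchoose : (fun n : ℕ => (((a + b) * n).choose (a * n) : ℝ)) =
      fun n => ((a + b) * n)! / ((a * n)! * (b * n)! : ℝ) := by
    ext n
    rw [Nat.cast_choose ℝ (Nat.mul_le_mul_right n (Nat.le_add_right a b)), add_mul,
      Nat.add_sub_cancel_left]
  rw [hchoose]
  refine ((factorial_mul_isEquivalent (Nat.add_pos_left ha b)).div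
    ((factorial_mul_isEquivalent ha).mul (factorial_mul_isEquivalent hb))).congr_right ?_
  filter_upwards [eventually_ne_atTop 0] with n hn
  have hn' : (0 : ℝ) < n := by positivity
  have hsqrt : √(2 * ((a + b : ℕ) * n) * π) / (√(2 * (a * n) * π) * √(2 * (b * n) * π)) =
      √((a + b) / (2 * π * a * b * n)) := by
    rw [← sqrt_mul (by positivity), ← sqrt_div (by positivity)]
    congr 1
    push_cast
    field_simp
  simp only [Pi.div_apply, Pi.mul_apply]
  rw [mul_div_exp_pow, mul_div_exp_pow, mul_div_exp_pow, ← hsqrt]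
  have ha' : (a : ℝ) ≠ 0 := by positivity
  have hb' : (b : ℝ) ≠ 0 := by positivity
  push_cast
  rw [Nat.add_mul, pow_add ((n : ℝ) / exp 1), div_pow (((a : ℝ) + b) ^ (a + b)),
    mul_pow ((a : ℝ) ^ a)]
  field_simp

theorem isEquivalent_mul_add {c : ℝ} (hc : c ≠ 0) (d : ℝ) :
    (fun n : ℕ => c * n + d) ~[atTop] fun n => c * n := by
  refine IsEquivalent.refl.add_isLittleO (isLittleO_const_left.2 (Or.inr ?_))
  refine (tendsto_natCast_atTop_atTop.const_mul_atTop (abs_pos.2 hc)).congr fun n => ?_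
  simp

theorem gseq_eq_mul_choose {n : ℕ} (hn : n ≠ 0) :
    gseq n = (8 * n + 2) / ((n + 1) * (3 * n + 1) * (3 * n + 2)) * ((4 * n).choose n : ℝ) := by
  have h3n : 4 * n - n = 3 * n := by omega
  rw [gseq, if_neg hn, Nat.cast_choose ℝ (by omega), h3n, show 4 * n + 1 = (4 * n).succ from rfl,
    show 3 * n + 2 = (3 * n + 1).succ from rfl, show 3 * n + 1 = (3 * n).succ from rfl]
  simp only [Nat.factorial_succ]
  push_cast
  field_simp
  ring

theorem gseq_isEquivalent :
    gseq ~[atTop] fun n : ℕ => 1 / 16 * √(3 / (2 * π)) * (n : ℝ) ^ (-(5 / 2 : ℝ)) *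
      (256 / 27 : ℝ) ^ (n + 1) := by
  have hfrac : (fun n : ℕ => (8 * n + 2) / ((n + 1) * (3 * n + 1) * (3 * n + 2) : ℝ)) ~[atTop]
      fun n => 8 * n / (n * (3 * n) * (3 * n)) := by
    have hlin := isEquivalent_mul_add (d := 1) one_ne_zero
    simp only [one_mul] at hlin
    exact (isEquivalent_mul_add (by norm_num) 2).div
      ((hlin.mul (isEquivalent_mul_add (by norm_num) 1)).mul (isEquivalent_mul_add (by norm_num) 2))
  have hchoose : (fun n : ℕ => ((4 * n).choose n : ℝ)) ~[atTop]
      fun n => 2 / (√2 * √π * √3 * √n) * (256 / 27) ^ n := by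
    have h := isEquivalent_choose_mul one_pos three_pos
    norm_num at h
    exact h
  refine (((hfrac.mul hchoose).congr_left ?_).congr_right ?_)
  · filter_upwards [eventually_ne_atTop 0] with n hn
    exact (gseq_eq_mul_choose hn).symm
  · filter_upwards [eventually_ne_atTop 0] with n hn
    have hn' : (0 : ℝ) < n := by positivity
    have hrpow : (n : ℝ) ^ (-(5 / 2 : ℝ)) = ((n : ℝ) ^ 2 * √n)⁻¹ := by
      rw [rpow_neg hn'.le, show (5 / 2 : ℝ) = 2 + 1 / 2 by norm_num, rpow_add hn', rpow_two,
        sqrt_eq_rpow]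
    have h3 : √3 ^ 2 = (3 : ℝ) := sq_sqrt zero_le_three
    simp only [Pi.mul_apply]
    rw [hrpow, sqrt_div zero_le_three, sqrt_mul zero_le_two, pow_succ]
    field_simp
    rw [h3, pow_succ]
    ring

/-- `g_n ~ (1/16)·√(3/(2π))·n^(-5/2)·(256/27)^(n+1)` as `n → ∞`. -/
theorem stmt_0 :
    Tendsto
      (fun n : ℕ =>
        gseq n /
          ((1 / 16) * Real.sqrt (3 / (2 * Real.pi)) * (n : ℝ) ^ (-(5 / 2 : ℝ)) *
            (256 / 27 : ℝ) ^ (n + 1)))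
      atTop (𝓝 1) := by
  refine (isEquivalent_iff_tendsto_one ?_).1 gseq_isEquivalent
  filter_upwards [eventually_ne_atTop 0] with n hn
  positivity
end

section
/- For a real number x ≥ 0, the series ∑_{n≥1} g_n * x^n is summable if and only if x ≤ 27/256. In particular the radius of convergence of the power series ∑_{n≥1} g_n x^n equals 27/256 and the series converges at its radius of convergence. -/
open Filter Topology

lemma gseq_nonneg (n : ℕ) : 0 ≤ gseq n := by
  unfold gseq
  split_ifs <;> positivity

lemma gseq_one : gseq 1 = 1 := by
  norm_num [gseq, Nat.factorial]

lemma gseq_succ_mul {n : ℕ} (hn : n ≠ 0) :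
    gseq (n + 1) * (((n : ℝ) + 2) * (3 * n + 3) * (3 * n + 4) * (3 * n + 5))
      = gseq n * ((4 * (n : ℝ) + 2) * (4 * n + 3) * (4 * n + 4) * (4 * n + 5)) := by
  rw [gseq, gseq, if_neg n.succ_ne_zero, if_neg hn,
    show 4 * (n + 1) + 1 = 4 * n + 1 + 1 + 1 + 1 + 1 by ring,
    show 3 * (n + 1) + 2 = 3 * n + 2 + 1 + 1 + 1 by ring]
  simp only [Nat.factorial_succ]
  have := (n + 1).factorial_pos
  have := (3 * n + 2).factorial_pos
  push_cast
  field_simp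
  ring

noncomputable def gseqScaled (n : ℕ) : ℝ := gseq n * (27 / 256) ^ n

lemma gseqScaled_nonneg (n : ℕ) : 0 ≤ gseqScaled n :=
  mul_nonneg (gseq_nonneg n) (by positivity)

lemma gseqScaled_succ_mul {n : ℕ} (hn : n ≠ 0) :
    256 * gseqScaled (n + 1) * (((n : ℝ) + 2) * (3 * n + 3) * (3 * n + 4) * (3 * n + 5))
      = 27 * gseqScaled n * ((4 * (n : ℝ) + 2) * (4 * n + 3) * (4 * n + 4) * (4 * n + 5)) := by
  unfold gseqScaled
  linear_combination (256 * (27 / 256 : ℝ) ^ (n + 1)) * gseq_succ_mul hn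

lemma gseqScaled_succ_mul_sq_le {n : ℕ} (hn : n ≠ 0) :
    gseqScaled (n + 1) * ((n : ℝ) + 2) ^ 2 ≤ gseqScaled n * ((n : ℝ) + 1) ^ 2 := by
  set D : ℝ := ((n : ℝ) + 2) * (3 * n + 3) * (3 * n + 4) * (3 * n + 5)
  set R : ℝ := (4 * (n : ℝ) + 2) * (4 * n + 3) * (4 * n + 4) * (4 * n + 5)
  have hpoly : 27 * R * ((n : ℝ) + 2) ^ 2 ≤ 256 * D * ((n : ℝ) + 1) ^ 2 := by
    have hgap : 256 * D * ((n : ℝ) + 1) ^ 2 - 27 * R * ((n : ℝ) + 2) ^ 2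
        = 17760 + 69504 * n + 104760 * n ^ 2 + 75720 * n ^ 3 + 26160 * n ^ 4 + 3456 * n ^ 5 := by
      ring
    linarith [show (0 : ℝ) ≤ 17760 + 69504 * n + 104760 * n ^ 2 + 75720 * n ^ 3
      + 26160 * n ^ 4 + 3456 * n ^ 5 by positivity]
  refine le_of_mul_le_mul_right ?_ (by positivity : 0 < 256 * D)
  calc gseqScaled (n + 1) * ((n : ℝ) + 2) ^ 2 * (256 * D)
      = gseqScaled n * (27 * R * ((n : ℝ) + 2) ^ 2) := by
        linear_combination ((n : ℝ) + 2) ^ 2 * gseqScaled_succ_mul hn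
    _ ≤ gseqScaled n * (256 * D * ((n : ℝ) + 1) ^ 2) :=
        mul_le_mul_of_nonneg_left hpoly (gseqScaled_nonneg n)
    _ = gseqScaled n * ((n : ℝ) + 1) ^ 2 * (256 * D) := by ring

lemma gseqScaled_mul_cube_le {n : ℕ} (hn : n ≠ 0) :
    gseqScaled n * (n : ℝ) ^ 3 ≤ gseqScaled (n + 1) * ((n : ℝ) + 1) ^ 3 := by
  set D : ℝ := ((n : ℝ) + 2) * (3 * n + 3) * (3 * n + 4) * (3 * n + 5)
  set R : ℝ := (4 * (n : ℝ) + 2) * (4 * n + 3) * (4 * n + 4) * (4 * n + 5)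
  have hpoly : 256 * D * (n : ℝ) ^ 3 ≤ 27 * R * ((n : ℝ) + 1) ^ 3 := by
    have hgap : 27 * R * ((n : ℝ) + 1) ^ 3 - 256 * D * (n : ℝ) ^ 3
        = 3240 + 26352 * n + 90288 * n ^ 2 + 138624 * n ^ 3 + 100584 * n ^ 4
          + 32592 * n ^ 5 + 3456 * n ^ 6 := by
      ring
    linarith [show (0 : ℝ) ≤ 3240 + 26352 * n + 90288 * n ^ 2 + 138624 * n ^ 3
      + 100584 * n ^ 4 + 32592 * n ^ 5 + 3456 * n ^ 6 by positivity]
  refine le_of_mul_le_mul_right ?_ (by positivity : 0 < 256 * D)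
  calc gseqScaled n * (n : ℝ) ^ 3 * (256 * D) = gseqScaled n * (256 * D * (n : ℝ) ^ 3) := by ring
    _ ≤ gseqScaled n * (27 * R * ((n : ℝ) + 1) ^ 3) :=
        mul_le_mul_of_nonneg_left hpoly (gseqScaled_nonneg n)
    _ = gseqScaled (n + 1) * ((n : ℝ) + 1) ^ 3 * (256 * D) := by
        linear_combination -((n : ℝ) + 1) ^ 3 * gseqScaled_succ_mul hn

lemma gseqScaled_succ_le (n : ℕ) : gseqScaled (n + 1) ≤ 27 / 64 / ((n : ℝ) + 2) ^ 2 := by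
  have hanti : Antitone fun k : ℕ => gseqScaled (k + 1) * ((k : ℝ) + 2) ^ 2 :=
    antitone_nat_of_succ_le fun k => by
      have := gseqScaled_succ_mul_sq_le k.succ_ne_zero
      push_cast at this ⊢
      linarith
  have h := hanti (Nat.zero_le n)
  norm_num [gseqScaled, gseq_one] at h
  rwa [le_div_iff₀ (by positivity)]

lemma le_gseqScaled_succ_mul_cube (n : ℕ) :
    27 / 256 ≤ gseqScaled (n + 1) * ((n : ℝ) + 1) ^ 3 := by
  have hmono : Monotone fun k : ℕ => gseqScaled (k + 1) * ((k : ℝ) + 1) ^ 3 :=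
    monotone_nat_of_le_succ fun k => by
      have := gseqScaled_mul_cube_le k.succ_ne_zero
      push_cast at this ⊢
      linarith
  simpa [gseqScaled, gseq_one] using hmono (Nat.zero_le n)

lemma summable_gseq_mul_pow {x : ℝ} (hx₀ : 0 ≤ x) (hx : x ≤ 27 / 256) :
    Summable fun n => gseq n * x ^ n := by
  rw [← summable_nat_add_iff 1]
  have hdom : Summable fun n : ℕ => 27 / 64 / ((n : ℝ) + 2) ^ 2 := by
    have := (summable_nat_add_iff 2).mpr (Real.summable_one_div_nat_pow.mpr one_lt_two)
    simpa [div_eq_mul_one_div (27 / 64 : ℝ)] using this.mul_left (27 / 64)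
  refine hdom.of_nonneg_of_le (fun n => mul_nonneg (gseq_nonneg _) (by positivity))
    fun n => le_trans ?_ (gseqScaled_succ_le n)
  exact mul_le_mul_of_nonneg_left (pow_le_pow_left₀ hx₀ hx _) (gseq_nonneg _)

lemma not_summable_gseq_mul_pow {x : ℝ} (hx : 27 / 256 < x) :
    ¬ Summable fun n => gseq n * x ^ n := by
  intro hsum
  set q : ℝ := 256 / 27 * x
  have hq : 1 < q := by simp only [q]; linarith
  have hterms : Tendsto (fun n : ℕ => gseq (n + 1) * x ^ (n + 1)) atTop (𝓝 0) :=
    (tendsto_add_atTop_iff_nat 1).mpr hsum.tendsto_atTop_zero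
  have hpoly : Tendsto (fun n : ℕ => ((n : ℝ) + 1) ^ 3 / q ^ (n + 1)) atTop (𝓝 0) := by
    simpa using (tendsto_add_atTop_iff_nat 1).mpr (tendsto_pow_const_div_const_pow_of_one_lt 3 hq)
  have hlim := hterms.mul hpoly
  rw [zero_mul] at hlim
  refine absurd (ge_of_tendsto' hlim fun n => ?_) (by norm_num : ¬ (27 / 256 : ℝ) ≤ 0)
  calc (27 / 256 : ℝ) ≤ gseqScaled (n + 1) * ((n : ℝ) + 1) ^ 3 := le_gseqScaled_succ_mul_cube n
    _ = gseq (n + 1) * x ^ (n + 1) * (((n : ℝ) + 1) ^ 3 / q ^ (n + 1)) := by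
      have : (256 / 27 * x) ^ (n + 1) ≠ 0 := by positivity
      simp only [gseqScaled, q]
      field_simp
      rw [mul_assoc, ← mul_pow]
      norm_num

/-- For `x ≥ 0`, the series `∑ g_n xⁿ` is summable iff `x ≤ 27/256`: the radius of
convergence is `27/256` and the series converges at its radius of convergence. -/
theorem stmt_1 (x : ℝ) (hx : 0 ≤ x) :
    Summable (fun n : ℕ => gseq n * x ^ n) ↔ x ≤ 27 / 256 :=
  ⟨fun h => not_lt.mp fun hlt => not_summable_gseq_mul_pow hlt h, summable_gseq_mul_pow hx⟩
end

section
/- Let (a_n)_{n≥0} be a sequence of nonnegative real numbers, let ρ > 1 and B > 0 be real numbers, and suppose that a_n * n^(5/2) * ρ^(-n) → B as n → ∞. Then the series ∑_{k≥0} a_k ρ^(-k) is summable, and the convolution ratio (∑_{k=0}^{n} a_k * a_{n-k}) / a_n tends to 2 * ∑_{k≥0} a_k ρ^(-k) as n → ∞. -/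
/-!
After the substitution `b n = a n / ρ ^ n`, which leaves the ratio of the convolution to `a n`
unchanged, the hypothesis reads `b n ~ B n ^ (-5/2)`. Hence `b` is summable, `b (n - k) / b n → 1`
for each fixed `k`, and `b (n - k) / b n` stays bounded for `k ≤ n / 2`. By the symmetry
`k ↔ n - k` the convolution is twice its lower half (up to the middle term), and the lower half
divided by `b n` is a series whose `k`-th term tends to `b k` under the summable domination
`C ‖b k‖`, so Tannery's theorem gives the limit `∑ b k`.
-/

open Filter Topology Finset Asymptotics

lemma sum_range_mul_sub_eq_add_ite {R : Type*} [CommSemiring R] (b : ℕ → R) (n : ℕ) :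
    ∑ k ∈ range (n + 1), b k * b (n - k) =
      (∑ k ∈ range (n + 1), if 2 * k ≤ n then b k * b (n - k) else 0) +
        ∑ k ∈ range (n + 1), if 2 * k + 1 ≤ n then b k * b (n - k) else 0 := by
  have hreflect : (∑ k ∈ range (n + 1), if 2 * k ≤ n then 0 else b k * b (n - k)) =
      ∑ k ∈ range (n + 1), if 2 * k + 1 ≤ n then b k * b (n - k) else 0 := by
    rw [← sum_range_reflect]
    refine sum_congr rfl fun k hk => ?_
    have hkn : k ≤ n := Nat.lt_succ_iff.mp (mem_range.mp hk)
    rw [Nat.add_sub_cancel, Nat.sub_sub_self hkn]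
    split_ifs <;> first | rfl | ring | omega
  rw [← hreflect, ← sum_add_distrib]
  exact sum_congr rfl fun k _ => by split_ifs <;> simp

lemma sum_range_mul_sub_div_pow {K : Type*} [Field K] (a : ℕ → K) {ρ : K} (hρ : ρ ≠ 0) (n : ℕ) :
    (∑ k ∈ range (n + 1), a k / ρ ^ k * (a (n - k) / ρ ^ (n - k))) / (a n / ρ ^ n) =
      (∑ k ∈ range (n + 1), a k * a (n - k)) / a n := by
  have hterm : ∀ k ∈ range (n + 1), a k / ρ ^ k * (a (n - k) / ρ ^ (n - k)) =
      a k * a (n - k) / ρ ^ n := fun k hk => by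
    rw [div_mul_div_comm, ← pow_add, Nat.add_sub_cancel' (Nat.lt_succ_iff.mp (mem_range.mp hk))]
  rw [sum_congr rfl hterm, ← sum_div, div_div_div_cancel_right₀ (pow_ne_zero n hρ)]

section Convolution

variable {𝕜 : Type*} [NormedField 𝕜] [CompleteSpace 𝕜] {b : ℕ → 𝕜} {C : ℝ}

lemma tendsto_sum_range_ite_mul_sub_div (i : ℕ) (hsum : Summable (‖b ·‖))
    (hratio : ∀ k, Tendsto (fun n => b (n - k) / b n) atTop (𝓝 1))
    (hbound : ∀ᶠ n in atTop, ∀ k, 2 * k ≤ n → ‖b (n - k) / b n‖ ≤ C) :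
    Tendsto (fun n => (∑ k ∈ range (n + 1), if 2 * k + i ≤ n then b k * b (n - k) else 0) / b n)
      atTop (𝓝 (∑' k, b k)) := by
  set f : ℕ → ℕ → 𝕜 := fun n k => if 2 * k + i ≤ n then b k * (b (n - k) / b n) else 0
  have htsum : ∀ n, ∑' k, f n k =
      (∑ k ∈ range (n + 1), if 2 * k + i ≤ n then b k * b (n - k) else 0) / b n := by
    intro n
    rw [tsum_eq_sum (s := range (n + 1)) fun k hk => if_neg (by simp at hk; omega), sum_div]
    exact sum_congr rfl fun k _ => by simp only [ite_div, zero_div, mul_div_assoc]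
  have hpointwise : ∀ k, Tendsto (f · k) atTop (𝓝 (b k)) := by
    intro k
    have := (hratio k).const_mul (b k)
    rw [mul_one] at this
    refine this.congr' ?_
    filter_upwards [eventually_ge_atTop (2 * k + i)] with n hn
    simp only [f, if_pos hn]
  have hdominated : ∀ᶠ n in atTop, ∀ k, ‖f n k‖ ≤ C * ‖b k‖ := by
    filter_upwards [hbound] with n hn k
    by_cases hk : 2 * k + i ≤ n
    · simp only [f, if_pos hk, norm_mul]
      rw [mul_comm C]
      exact mul_le_mul_of_nonneg_left (hn k (by omega)) (norm_nonneg _)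
    · simp only [f, if_neg hk, norm_zero]
      -- `C ≥ 0`, since `hbound` at `k = 0` bounds `‖b n / b n‖`
      exact mul_nonneg ((norm_nonneg _).trans (hn 0 (Nat.zero_le n))) (norm_nonneg _)
  exact (tendsto_tsum_of_dominated_convergence (hsum.mul_left C) hpointwise hdominated).congr htsum

theorem tendsto_sum_range_mul_sub_div (hsum : Summable (‖b ·‖))
    (hratio : ∀ k, Tendsto (fun n => b (n - k) / b n) atTop (𝓝 1))
    (hbound : ∀ᶠ n in atTop, ∀ k, 2 * k ≤ n → ‖b (n - k) / b n‖ ≤ C) :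
    Tendsto (fun n => (∑ k ∈ range (n + 1), b k * b (n - k)) / b n) atTop
      (𝓝 (2 * ∑' k, b k)) := by
  rw [two_mul]
  refine ((tendsto_sum_range_ite_mul_sub_div 0 hsum hratio hbound).add
    (tendsto_sum_range_ite_mul_sub_div 1 hsum hratio hbound)).congr fun n => ?_
  rw [sum_range_mul_sub_eq_add_ite, add_div]
  rfl

end Convolution

section PowerLaw

variable {b : ℕ → ℝ} {s B : ℝ}

lemma div_eq_mul_rpow_div {m n : ℕ} (hm : 0 < m) (hn : 0 < n) :
    b m / b n = b m * (m : ℝ) ^ s / (b n * (n : ℝ) ^ s) * ((n : ℝ) / m) ^ s := by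
  have hm' : (m : ℝ) ^ s ≠ 0 := (Real.rpow_pos_of_pos (Nat.cast_pos.mpr hm) s).ne'
  have hn' : (n : ℝ) ^ s ≠ 0 := (Real.rpow_pos_of_pos (Nat.cast_pos.mpr hn) s).ne'
  rw [Real.div_rpow (Nat.cast_nonneg n) (Nat.cast_nonneg m)]
  field_simp

lemma summable_norm_of_tendsto_mul_rpow (hs : 1 < s)
    (h : Tendsto (fun n => b n * (n : ℝ) ^ s) atTop (𝓝 B)) : Summable (‖b ·‖) := by
  refine summable_of_isBigO_nat (Real.summable_nat_rpow.2 (neg_lt_neg hs)) ?_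
  have hO := (h.isBigO_one ℝ).mul (isBigO_refl (fun n : ℕ => (n : ℝ) ^ (-s)) atTop)
  refine (hO.congr' ?_ (by simp)).norm_left
  filter_upwards [eventually_gt_atTop 0] with n hn
  rw [mul_assoc, ← Real.rpow_add (Nat.cast_pos.mpr hn), add_neg_cancel, Real.rpow_zero, mul_one]

lemma tendsto_natCast_div_natCast_sub (k : ℕ) :
    Tendsto (fun n : ℕ => (n : ℝ) / (n - k : ℕ)) atTop (𝓝 1) := by
  have h := ((tendsto_natCast_div_add_atTop (k : ℝ)).inv₀ one_ne_zero).comp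
    (tendsto_sub_atTop_nat k)
  rw [inv_one] at h
  refine h.congr' ?_
  filter_upwards [eventually_ge_atTop k] with n hn
  simp [Nat.cast_sub hn]

lemma tendsto_div_comp_sub_of_tendsto_mul_rpow (hB : B ≠ 0)
    (h : Tendsto (fun n => b n * (n : ℝ) ^ s) atTop (𝓝 B)) (k : ℕ) :
    Tendsto (fun n => b (n - k) / b n) atTop (𝓝 1) := by
  have hφ : Tendsto (fun n => b (n - k) * ((n - k : ℕ) : ℝ) ^ s / (b n * (n : ℝ) ^ s))
      atTop (𝓝 1) := by
    have := (h.comp (tendsto_sub_atTop_nat k)).div h hB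
    rwa [div_self hB] at this
  have hpow := (tendsto_natCast_div_natCast_sub k).rpow_const (p := s) (Or.inl one_ne_zero)
  rw [Real.one_rpow] at hpow
  have hprod := hφ.mul hpow
  rw [mul_one] at hprod
  refine hprod.congr' ?_
  filter_upwards [eventually_gt_atTop k] with n hn
  exact (div_eq_mul_rpow_div (by omega) (by omega)).symm

lemma exists_norm_div_comp_sub_le (hs : 0 ≤ s) (hB : B ≠ 0)
    (h : Tendsto (fun n => b n * (n : ℝ) ^ s) atTop (𝓝 B)) :
    ∃ C, ∀ᶠ n in atTop, ∀ k, 2 * k ≤ n → ‖b (n - k) / b n‖ ≤ C := by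
  have hB' : 0 < ‖B‖ := norm_pos_iff.mpr hB
  obtain ⟨N, hN⟩ := eventually_atTop.mp <|
    (h.norm.eventually (Ioo_mem_nhds (half_lt_self hB') (lt_two_mul_self hB'))).and
      (eventually_gt_atTop 0)
  refine ⟨4 * 2 ^ s, ?_⟩
  filter_upwards [eventually_ge_atTop (2 * N)] with n hn k hk
  obtain ⟨⟨hlo, -⟩, hn0⟩ := hN n (by omega)
  obtain ⟨⟨-, hhi⟩, hnk0⟩ := hN (n - k) (by omega)
  have hratio : ‖b (n - k) * ((n - k : ℕ) : ℝ) ^ s / (b n * (n : ℝ) ^ s)‖ ≤ 4 := by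
    rw [norm_div, div_le_iff₀ ((half_pos hB').trans hlo)]
    linarith
  have hpow : ‖((n : ℝ) / (n - k : ℕ)) ^ s‖ ≤ 2 ^ s := by
    have hpos : (0 : ℝ) < (n - k : ℕ) := Nat.cast_pos.mpr hnk0
    rw [Real.norm_of_nonneg (by positivity)]
    refine Real.rpow_le_rpow (by positivity) ?_ hs
    rw [div_le_iff₀ hpos]
    exact_mod_cast (by omega : n ≤ 2 * (n - k))
  rw [div_eq_mul_rpow_div hnk0 hn0, norm_mul]
  exact mul_le_mul hratio hpow (norm_nonneg _) (by norm_num)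

end PowerLaw

theorem stmt_4_general (a : ℕ → ℝ) (ρ B : ℝ) (hρ : 1 < ρ) (hB : 0 < B)
    (hasymp :
      Tendsto (fun n : ℕ => a n * (n : ℝ) ^ ((5 : ℝ) / 2) / ρ ^ n) atTop (𝓝 B)) :
    Summable (fun k : ℕ => a k / ρ ^ k) ∧
      Tendsto (fun n : ℕ => (∑ k ∈ Finset.range (n + 1), a k * a (n - k)) / a n) atTop
        (𝓝 (2 * ∑' k : ℕ, a k / ρ ^ k)) := by
  have hρ0 : ρ ≠ 0 := (zero_lt_one.trans hρ).ne'
  set b : ℕ → ℝ := fun n => a n / ρ ^ n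
  have hb : Tendsto (fun n : ℕ => b n * (n : ℝ) ^ ((5 : ℝ) / 2)) atTop (𝓝 B) :=
    hasymp.congr fun n => by ring
  have hsum := summable_norm_of_tendsto_mul_rpow (by norm_num) hb
  obtain ⟨C, hC⟩ := exists_norm_div_comp_sub_le (by norm_num) hB.ne' hb
  refine ⟨hsum.of_norm, ?_⟩
  refine (tendsto_sum_range_mul_sub_div hsum
    (tendsto_div_comp_sub_of_tendsto_mul_rpow hB.ne' hb) hC).congr fun n => ?_
  exact sum_range_mul_sub_div_pow a hρ0 n

/-- Convolution transfer principle: if `a_n ≥ 0` and `a_n · n^(5/2) · ρ^(-n) → B > 0`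
with `ρ > 1`, then `∑ a_k ρ^(-k)` is summable and
`(∑_{k=0}^n a_k a_{n-k}) / a_n → 2 · ∑_{k≥0} a_k ρ^(-k)`. -/
theorem stmt_4 (a : ℕ → ℝ) (ha : ∀ n, 0 ≤ a n) (ρ B : ℝ) (hρ : 1 < ρ) (hB : 0 < B)
    (hasymp :
      Tendsto (fun n : ℕ => a n * (n : ℝ) ^ ((5 : ℝ) / 2) / ρ ^ n) atTop (𝓝 B)) :
    Summable (fun k : ℕ => a k / ρ ^ k) ∧
      Tendsto (fun n : ℕ => (∑ k ∈ Finset.range (n + 1), a k * a (n - k)) / a n) atTop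
        (𝓝 (2 * ∑' k : ℕ, a k / ρ ^ k)) :=
  stmt_4_general a ρ B hρ hB hasymp
end

section
/- Let (a_n)_{n≥0} and (h_m)_{m≥0} be sequences of nonnegative real numbers with a_0 = 0 and a_n > 0 for some n ≥ 1, let r > 0 be a real number such that ∑_{n} a_n r^n is summable, and suppose that for every real x with 0 ≤ x < r the series ∑_m h_m * (∑_n a_n x^n)^m is summable with sum equal to (∑_n a_n x^n) - x. Then for every real y with 0 ≤ y < ∑_n a_n r^n, the series ∑_m h_m y^m is summable; i.e., the radius of convergence of ∑_m h_m y^m is at least ∑_n a_n r^n. -/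
/-- If `a_n ≥ 0`, `a_0 = 0`, some `a_n > 0` (`n ≥ 1`), `h_m ≥ 0`, `∑ a_n rⁿ` is summable
for some `r > 0`, and Tutte's compositional identity `h(g(x)) = g(x) - x` holds for
`0 ≤ x < r` (where `g(x) = ∑ a_n xⁿ` and `h(y) = ∑ h_m yᵐ`), then `∑ h_m yᵐ` is
summable for every `0 ≤ y < g(r)`; i.e. the radius of convergence of `h` is at least `g(r)`. -/
theorem stmt_7 (a h : ℕ → ℝ) (ha : ∀ n, 0 ≤ a n) (hh : ∀ m, 0 ≤ h m)
    (ha0 : a 0 = 0) (hapos : ∃ n, 1 ≤ n ∧ 0 < a n)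
    (r : ℝ) (hr : 0 < r) (hsum : Summable fun n : ℕ => a n * r ^ n)
    (hcomp : ∀ x : ℝ, 0 ≤ x → x < r →
      Summable (fun m : ℕ => h m * (∑' n : ℕ, a n * x ^ n) ^ m) ∧
        ∑' m : ℕ, h m * (∑' n : ℕ, a n * x ^ n) ^ m = (∑' n : ℕ, a n * x ^ n) - x) :
    ∀ y : ℝ, 0 ≤ y → y < ∑' n : ℕ, a n * r ^ n →
      Summable fun m : ℕ => h m * y ^ m := by
  intro y hy hylt
  -- find N with partial sum at r exceeding y
  obtain ⟨N, hN⟩ := ((hsum.hasSum.tendsto_sum_nat.eventually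
    (eventually_gt_nhds hylt))).exists
  set f : ℝ → ℝ := fun x => ∑ n ∈ Finset.range N, a n * x ^ n with hf
  have hfc : Continuous f := by
    apply continuous_finset_sum
    intro n _
    exact (continuous_const.mul (continuous_pow n))
  have hfr : y < f r := hN
  -- find x in (0, r) with y < f x
  have hne : (nhdsWithin r (Set.Ioo 0 r)).NeBot := by
    refine mem_closure_iff_nhdsWithin_neBot.mp ?_
    rw [closure_Ioo hr.ne]
    exact ⟨le_of_lt hr, le_rfl⟩
  have htend : Filter.Tendsto f (nhdsWithin r (Set.Ioo 0 r)) (nhds (f r)) :=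
    (hfc.continuousAt).continuousWithinAt
  have hev : ∀ᶠ x in nhdsWithin r (Set.Ioo 0 r), y < f x ∧ x ∈ Set.Ioo 0 r :=
    (htend.eventually (eventually_gt_nhds hfr)).and self_mem_nhdsWithin
  obtain ⟨x, hxf, hx0, hxr⟩ := hev.exists
  -- g(x) summable and ≥ f x
  have hsx : Summable fun n : ℕ => a n * x ^ n := by
    refine hsum.of_nonneg_of_le (fun n => mul_nonneg (ha n) (pow_nonneg hx0.le n)) ?_
    intro n
    exact mul_le_mul_of_nonneg_left (pow_le_pow_left₀ hx0.le hxr.le n) (ha n)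
  have hfg : f x ≤ ∑' n : ℕ, a n * x ^ n :=
    Summable.sum_le_tsum (Finset.range N) (fun n _ => mul_nonneg (ha n) (pow_nonneg hx0.le n)) hsx
  have hyg : y ≤ ∑' n : ℕ, a n * x ^ n := le_trans hxf.le hfg
  obtain ⟨hS, -⟩ := hcomp x hx0.le hxr
  refine hS.of_nonneg_of_le (fun m => mul_nonneg (hh m) (pow_nonneg hy m)) ?_
  intro m
  exact mul_le_mul_of_nonneg_left (pow_le_pow_left₀ hy hyg m) (hh m)
end

section
/- Let V be a finite vertex type, G a simple graph on V, and A, B subsets of V with A ∪ B = V such that no edge of G joins a vertex of A \ B to a vertex of B \ A, and such that A ∩ B consists of three vertices that are pairwise adjacent in G (a triangle). If the induced subgraph of G on A admits a proper colouring with 4 colours and the induced subgraph of G on B admits a proper colouring with 4 colours, then G admits a proper colouring with 4 colours. -/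
lemma perm4_exists (a b c a' b' c' : Fin 4) (h1 : a ≠ b) (h2 : a ≠ c) (h3 : b ≠ c)
    (h1' : a' ≠ b') (h2' : a' ≠ c') (h3' : b' ≠ c') :
    ∃ σ : Equiv.Perm (Fin 4), σ a = a' ∧ σ b = b' ∧ σ c = c' := by
  revert h1 h2 h3 h1' h2' h3'; revert a b c a' b' c'; decide

/-- If a simple graph `G` on a finite vertex set is covered by two sets `A`, `B` with no
edge between `A \ B` and `B \ A`, and `A ∩ B` is a triangle (three pairwise adjacent
vertices), then 4-colourability of the induced subgraphs on `A` and on `B` implies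
4-colourability of `G`. -/
theorem stmt_10 {V : Type*} [Fintype V] (G : SimpleGraph V) (A B : Set V)
    (hcover : A ∪ B = Set.univ)
    (hsep : ∀ u ∈ A \ B, ∀ v ∈ B \ A, ¬ G.Adj u v)
    (x y z : V) (hxy : x ≠ y) (hxz : x ≠ z) (hyz : y ≠ z)
    (hAB : A ∩ B = {x, y, z})
    (hadjxy : G.Adj x y) (hadjxz : G.Adj x z) (hadjyz : G.Adj y z)
    (hA : (G.induce A).Colorable 4) (hB : (G.induce B).Colorable 4) :
    G.Colorable 4 := by
  obtain ⟨cA⟩ := hA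
  obtain ⟨cB⟩ := hB
  have hxAB : x ∈ A ∩ B := by rw [hAB]; left; rfl
  have hyAB : y ∈ A ∩ B := by rw [hAB]; right; left; rfl
  have hzAB : z ∈ A ∩ B := by rw [hAB]; right; right; rfl
  have hxA := hxAB.1; have hxB := hxAB.2
  have hyA := hyAB.1; have hyB := hyAB.2
  have hzA := hzAB.1; have hzB := hzAB.2
  -- colors of triangle vertices are distinct in each coloring
  have dA1 : cA ⟨x, hxA⟩ ≠ cA ⟨y, hyA⟩ := cA.valid hadjxy
  have dA2 : cA ⟨x, hxA⟩ ≠ cA ⟨z, hzA⟩ := cA.valid hadjxz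
  have dA3 : cA ⟨y, hyA⟩ ≠ cA ⟨z, hzA⟩ := cA.valid hadjyz
  have dB1 : cB ⟨x, hxB⟩ ≠ cB ⟨y, hyB⟩ := cB.valid hadjxy
  have dB2 : cB ⟨x, hxB⟩ ≠ cB ⟨z, hzB⟩ := cB.valid hadjxz
  have dB3 : cB ⟨y, hyB⟩ ≠ cB ⟨z, hzB⟩ := cB.valid hadjyz
  obtain ⟨σ, hσx, hσy, hσz⟩ := perm4_exists _ _ _ _ _ _ dB1 dB2 dB3 dA1 dA2 dA3
  have hmemB : ∀ v : V, v ∉ A → v ∈ B := by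
    intro v hv
    have : v ∈ A ∪ B := hcover ▸ Set.mem_univ v
    exact this.resolve_left hv
  -- on A ∩ B the two colourings (after σ) agree
  have hagree : ∀ (v : V) (hvA : v ∈ A) (hvB : v ∈ B),
      cA ⟨v, hvA⟩ = σ (cB ⟨v, hvB⟩) := by
    intro v hvA hvB
    have : v ∈ ({x, y, z} : Set V) := hAB ▸ ⟨hvA, hvB⟩
    rcases this with h | h | h <;> subst h
    · exact hσx.symm
    · exact hσy.symm
    · exact hσz.symm
  classical
  refine ⟨SimpleGraph.Coloring.mk
    (fun v => if h : v ∈ A then cA ⟨v, h⟩ else σ (cB ⟨v, hmemB v h⟩)) ?_⟩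
  intro u v huv
  by_cases hu : u ∈ A <;> by_cases hv : v ∈ A <;>
    simp only [hu, hv, dif_pos, dif_neg, not_false_iff]
  · exact cA.valid (by exact huv : (G.induce A).Adj ⟨u, hu⟩ ⟨v, hv⟩)
  · -- u ∈ A, v ∉ A, so v ∈ B \ A; u must be in B
    have hvB := hmemB v hv
    by_cases huB : u ∈ B
    · rw [hagree u hu huB]
      intro hEq
      exact cB.valid (by exact huv : (G.induce B).Adj ⟨u, huB⟩ ⟨v, hvB⟩)
        (σ.injective hEq)
    · exact absurd huv (hsep u ⟨hu, huB⟩ v ⟨hvB, hv⟩)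
  · have huB := hmemB u hu
    by_cases hvB : v ∈ B
    · rw [hagree v hv hvB]
      intro hEq
      exact cB.valid (by exact huv : (G.induce B).Adj ⟨u, huB⟩ ⟨v, hvB⟩)
        (σ.injective hEq)
    · exact absurd huv.symm (hsep v ⟨hv, hvB⟩ u ⟨huB, hu⟩)
  · exact fun hEq => cB.valid
      (by exact huv : (G.induce B).Adj ⟨u, hmemB u hu⟩ ⟨v, hmemB v hv⟩)
      (σ.injective hEq)
end
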